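/- Let G be a group and H ≤ G a subgroup, and n ≥ 0. Consider the bijection Ψ: G∖(ad(G) × (G/H)^{n+1}) → G^{n+1}/H^{n+1}, Ψ[g̃; g₀H, …, g_nH] = [g_n⁻¹ g̃ g₀, g₀⁻¹g₁, …, g_{n-1}⁻¹g_n]. Then Ψ maps the extended quotient G∖∖((G/H)^{n+1}) — i.e. the image in G∖(ad(G) × (G/H)^{n+1}) of the set of pairs (g̃, g₀H, …, g_nH) with g̃ g_iH = g_iH for all i = 0, …, n — bijectively onto the set of orbits [g₀, g₁, …, g_n] ∈ G^{n+1}/H^{n+1} such that g_{i+1}⋯g_n · g₀⋯g_i ∈ H for all i = 0, …, n. -/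
import Mathlib


/-!
STATEMENT 18: the bijection `Ψ : G∖(ad(G) × (G/H)^{n+1}) → G^{n+1}/H^{n+1}`,
`Ψ[g̃; g₀H,…,g_nH] = [g_n⁻¹g̃g₀, g₀⁻¹g₁, …, g_{n-1}⁻¹g_n]`, maps the extended quotient
`G∖∖((G/H)^{n+1})` (the image of `{(g̃, x) : ∀ i, g̃xᵢ = xᵢ}`) bijectively onto the set of
orbits `[g₀,…,g_n]` with `g_{i+1}⋯g_n·g₀⋯g_i ∈ H` for all `i = 0,…,n`.
-/

variable {G : Type*} [Group G] (H : Subgroup G)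

/-- The orbit equivalence of the right `H^{n+1}`-action on `G^{n+1}`. -/
def lrel (n : ℕ) : Setoid (Fin (n + 1) → G) where
  r a b := ∃ h : Fin (n + 1) → G, (∀ i, h i ∈ H) ∧ ∀ i, b i = (h i)⁻¹ * a i * h (i + 1)
  iseqv := by
    constructor
    · exact fun a => ⟨fun _ => 1, fun _ => H.one_mem, by simp⟩
    · rintro a b ⟨h, hm, he⟩
      exact ⟨fun i => (h i)⁻¹, fun i => H.inv_mem (hm i), fun i => by rw [he i]; group⟩
    · rintro a b c ⟨h, hm, he⟩ ⟨h', hm', he'⟩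
      exact ⟨fun i => h i * h' i, fun i => H.mul_mem (hm i) (hm' i),
        fun i => by rw [he' i, he i]; group⟩

/-- The orbit equivalence of the `G`-action `g·(g̃, x) = (g g̃ g⁻¹, g • x)`. -/
def rrel (n : ℕ) : Setoid (G × (Fin (n + 1) → G ⧸ H)) where
  r a b := ∃ g : G, b = (g * a.1 * g⁻¹, fun i => g • a.2 i)
  iseqv := by
    constructor
    · exact fun a => ⟨1, by simp⟩
    · rintro ⟨a₁, a₂⟩ b ⟨g, rfl⟩
      refine ⟨g⁻¹, Prod.ext (by group) ?_⟩
      funext i; simp [smul_smul]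
    · rintro ⟨a₁, a₂⟩ b c ⟨g, rfl⟩ ⟨g', rfl⟩
      refine ⟨g' * g, Prod.ext (by group) ?_⟩
      funext i; simp [smul_smul]

/-- representative-level `Ψ`: `(g̃, (g₀,…,g_n)) ↦ (g_n⁻¹g̃g₀, g₀⁻¹g₁, …, g_{n-1}⁻¹g_n)`. -/
def psiRep {n : ℕ} (gt : G) (x : Fin (n + 1) → G) : Fin (n + 1) → G :=
  fun i => if i = 0 then (x (Fin.last n))⁻¹ * gt * x 0 else (x (i - 1))⁻¹ * x i

section AuxPsi

variable {n : ℕ}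

lemma fin_succ_sub_one (j : Fin n) : (j.succ : Fin (n + 1)) - 1 = j.castSucc := by
  rw [← Fin.coeSucc_eq_succ]; exact add_sub_cancel_right _ _

lemma fin_zero_sub_one : (0 : Fin (n + 1)) - 1 = Fin.last n := by
  apply Fin.ext
  rw [Fin.coe_sub_one]
  simp

lemma psiRep_zero (gt : G) (x : Fin (n + 1) → G) :
    psiRep gt x 0 = (x (Fin.last n))⁻¹ * gt * x 0 := by simp [psiRep]

lemma psiRep_succ (gt : G) (x : Fin (n + 1) → G) (j : Fin n) :
    psiRep gt x j.succ = (x j.castSucc)⁻¹ * x j.succ := by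
  simp [psiRep, Fin.succ_ne_zero j, fin_succ_sub_one]

lemma psiRep_conj (g gt : G) (x : Fin (n + 1) → G) :
    psiRep (g * gt * g⁻¹) (fun i => g * x i) = psiRep gt x := by
  funext i
  unfold psiRep
  split <;> group

lemma psiRep_mul_mem (gt : G) (x h : Fin (n + 1) → G) (hm : ∀ i, h i ∈ H) :
    (lrel H n).r (psiRep gt x) (psiRep gt (fun i => x i * h i)) := by
  refine ⟨fun i => h (i - 1), fun i => hm _, fun i => ?_⟩
  induction i using Fin.cases with
  | zero =>
    simp only [psiRep_zero, fin_zero_sub_one, add_sub_cancel_right]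
    group
  | succ j =>
    simp only [psiRep_succ, fin_succ_sub_one, add_sub_cancel_right]
    group

lemma psiMk_congr (gt : G) (x x' : Fin (n + 1) → G)
    (hx : ∀ i, (QuotientGroup.mk (x i) : G ⧸ H) = QuotientGroup.mk (x' i)) :
    Quotient.mk (lrel H n) (psiRep gt x) = Quotient.mk (lrel H n) (psiRep gt x') := by
  have hm : ∀ i, (x i)⁻¹ * x' i ∈ H := fun i => QuotientGroup.eq.1 (hx i)
  have hx' : x' = fun i => x i * ((x i)⁻¹ * x' i) := by funext i; group
  refine Quotient.sound ?_
  rw [hx']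
  exact psiRep_mul_mem H gt x _ hm

/-- `Ψ` on representatives of the source quotient. -/
noncomputable def psiFun (H : Subgroup G) (n : ℕ) : G × (Fin (n + 1) → G ⧸ H) → Quotient (lrel H n) :=
  fun p => Quotient.mk (lrel H n) (psiRep p.1 (fun i => (p.2 i).out))

lemma psiFun_mk (gt : G) (y : Fin (n + 1) → G ⧸ H) (x : Fin (n + 1) → G)
    (hx : ∀ i, QuotientGroup.mk (x i) = y i) :
    psiFun H n (gt, y) = Quotient.mk (lrel H n) (psiRep gt x) :=
  psiMk_congr H gt _ x (fun i => by rw [QuotientGroup.out_eq']; exact (hx i).symm)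

/-- The Takeuchi–Galois transform `Ψ`. -/
noncomputable def psiQ (H : Subgroup G) (n : ℕ) : Quotient (rrel H n) → Quotient (lrel H n) :=
  Quotient.lift (psiFun H n) (by
    rintro ⟨gt, y⟩ b ⟨g, rfl⟩
    show psiFun H n (gt, y) = psiFun H n (g * gt * g⁻¹, fun i => g • y i)
    have hx2 : ∀ i, (QuotientGroup.mk (g * (y i).out) : G ⧸ H) = g • y i := fun i => by
      conv_rhs => rw [← QuotientGroup.out_eq' (y i)]
      rfl
    rw [psiFun_mk H gt y (fun i => (y i).out) (fun i => QuotientGroup.out_eq' _),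
      psiFun_mk H _ _ (fun i => g * (y i).out) hx2, psiRep_conj])

/-- partial products `x_i = a_1 ⋯ a_i`. -/
def xP (a : Fin (n + 1) → G) : Fin (n + 1) → G :=
  Fin.partialProd (fun j : Fin n => a j.succ)

lemma xP_zero (a : Fin (n + 1) → G) : xP a 0 = 1 := Fin.partialProd_zero _

lemma xP_succ (a : Fin (n + 1) → G) (j : Fin n) :
    xP a j.succ = xP a j.castSucc * a j.succ := Fin.partialProd_succ _ _

/-- `g̃ = x_n a_0`. -/
def gtP (a : Fin (n + 1) → G) : G := xP a (Fin.last n) * a 0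

lemma psiRep_section (a : Fin (n + 1) → G) : psiRep (gtP a) (xP a) = a := by
  funext i
  induction i using Fin.cases with
  | zero => rw [psiRep_zero, xP_zero, gtP]; group
  | succ j => rw [psiRep_succ, xP_succ]; group

lemma xP_rel (a b h : Fin (n + 1) → G) (he : ∀ i, b i = (h i)⁻¹ * a i * h (i + 1)) :
    ∀ i, xP b i = (h 1)⁻¹ * xP a i * h (i + 1) := by
  intro i
  induction i using Fin.induction with
  | zero => rw [xP_zero, xP_zero, zero_add]; group
  | succ j ih =>
    rw [xP_succ, xP_succ, ih, he j.succ, Fin.coeSucc_eq_succ]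
    group

/-- The inverse transform `Φ`. -/
def phiQ (H : Subgroup G) (n : ℕ) : Quotient (lrel H n) → Quotient (rrel H n) :=
  Quotient.lift
    (fun a => Quotient.mk (rrel H n) (gtP a, fun i => QuotientGroup.mk (xP a i)))
    (by
      rintro a b ⟨h, hm, he⟩
      refine Quotient.sound ⟨(h 1)⁻¹, Prod.ext ?_ ?_⟩
      · show gtP b = (h 1)⁻¹ * gtP a * (h 1)⁻¹⁻¹
        rw [gtP, gtP, xP_rel a b h he, Fin.last_add_one, he 0, zero_add]
        group
      · funext i
        show QuotientGroup.mk (xP b i) = (h 1)⁻¹ • QuotientGroup.mk (xP a i)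
        rw [xP_rel a b h he i, QuotientGroup.mk_mul_of_mem _ (hm (i + 1))]
        rfl)

lemma xP_psiRep (gt : G) (x : Fin (n + 1) → G) :
    ∀ i, xP (psiRep gt x) i = (x 0)⁻¹ * x i := by
  intro i
  induction i using Fin.induction with
  | zero => rw [xP_zero]; group
  | succ j ih => rw [xP_succ, ih, psiRep_succ]; group

lemma phi_psi : Function.LeftInverse (phiQ H n) (psiQ H n) := by
  intro q
  induction q using Quotient.inductionOn with
  | h p =>
    obtain ⟨gt, y⟩ := p
    set x : Fin (n + 1) → G := fun i => (y i).out with hxdef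
    show Quotient.mk (rrel H n)
        (gtP (psiRep gt x), fun i => QuotientGroup.mk (xP (psiRep gt x) i)) =
      Quotient.mk (rrel H n) (gt, y)
    refine Eq.symm (Quotient.sound ⟨(x 0)⁻¹, Prod.ext ?_ ?_⟩)
    · show gtP (psiRep gt x) = (x 0)⁻¹ * gt * (x 0)⁻¹⁻¹
      rw [gtP, xP_psiRep gt x, psiRep_zero]
      group
    · funext i
      show QuotientGroup.mk (xP (psiRep gt x) i) = (x 0)⁻¹ • y i
      rw [xP_psiRep gt x i, ← QuotientGroup.out_eq' (y i)]
      rfl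

lemma psi_phi : Function.RightInverse (phiQ H n) (psiQ H n) := by
  intro c
  induction c using Quotient.inductionOn with
  | h a =>
    show psiQ H n (Quotient.mk (rrel H n)
        (gtP a, fun i => QuotientGroup.mk (xP a i))) = Quotient.mk (lrel H n) a
    show psiFun H n (gtP a, fun i => QuotientGroup.mk (xP a i)) = Quotient.mk (lrel H n) a
    rw [psiFun_mk H _ _ (xP a) (fun i => rfl), psiRep_section]

lemma psiQ_bijective : Function.Bijective (psiQ H n) :=
  Function.bijective_iff_has_inverse.mpr ⟨phiQ H n, phi_psi H, psi_phi H⟩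

lemma take_psiRep (gt : G) (x : Fin (n + 1) → G) (i : Fin (n + 1)) :
    ((List.ofFn (psiRep gt x)).take ((i : ℕ) + 1)).prod = (x (Fin.last n))⁻¹ * gt * x i := by
  induction i using Fin.induction with
  | zero =>
    rw [show ((0 : Fin (n + 1)) : ℕ) = 0 from rfl,
      List.prod_take_succ _ 0 (by simp), List.getElem_ofFn]
    simp [psiRep_zero]
  | succ j ih =>
    have hlt : (j : ℕ) + 1 < (List.ofFn (psiRep gt x)).length := by
      simp
    rw [show ((j.succ : Fin (n + 1)) : ℕ) = (j : ℕ) + 1 from rfl,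
      List.prod_take_succ _ ((j : ℕ) + 1) hlt, List.getElem_ofFn,
      show (⟨(j : ℕ) + 1, by simp⟩ : Fin (n + 1)) = j.succ by
        ext; simp,
      psiRep_succ]
    rw [show ((j.castSucc : Fin (n + 1)) : ℕ) = (j : ℕ) from rfl] at ih
    rw [ih]
    group

lemma cyclic_psiRep (gt : G) (x : Fin (n + 1) → G) (i : Fin (n + 1)) :
    ((List.ofFn (psiRep gt x)).drop ((i : ℕ) + 1)).prod *
      ((List.ofFn (psiRep gt x)).take ((i : ℕ) + 1)).prod = (x i)⁻¹ * gt * x i := by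
  have htot : (List.ofFn (psiRep gt x)).prod = (x (Fin.last n))⁻¹ * gt * x (Fin.last n) := by
    have h := take_psiRep gt x (Fin.last n)
    rwa [show ((Fin.last n : Fin (n + 1)) : ℕ) + 1 = n + 1 from rfl,
      List.take_of_length_le (by simp)] at h
  have hsplit := List.prod_take_mul_prod_drop (List.ofFn (psiRep gt x)) ((i : ℕ) + 1)
  have hdrop : ((List.ofFn (psiRep gt x)).drop ((i : ℕ) + 1)).prod =
      (((List.ofFn (psiRep gt x)).take ((i : ℕ) + 1)).prod)⁻¹ *
        (List.ofFn (psiRep gt x)).prod := by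
    rw [← hsplit]; group
  rw [hdrop, htot, take_psiRep]
  group

lemma smul_mk_eq_iff (gt z : G) :
    gt • (QuotientGroup.mk z : G ⧸ H) = QuotientGroup.mk z ↔ z⁻¹ * gt * z ∈ H := by
  rw [show gt • (QuotientGroup.mk z : G ⧸ H) = QuotientGroup.mk (gt * z) from rfl,
    QuotientGroup.eq, show (gt * z)⁻¹ * z = (z⁻¹ * gt * z)⁻¹ by group, inv_mem_iff]

end AuxPsi

theorem extended_quotient_image {n : ℕ} :
    ∃ Ψ : Quotient (rrel H n) → Quotient (lrel H n),
      -- Ψ is the bijection of the dual Takeuchi–Galois transform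
      Function.Bijective Ψ ∧
      (∀ (gt : G) (x : Fin (n + 1) → G),
        Ψ (Quotient.mk (rrel H n) (gt, fun i => QuotientGroup.mk (x i))) =
          Quotient.mk (lrel H n) (psiRep gt x)) ∧
      -- it maps the extended quotient onto the orbits with cyclic products in `H`
      Set.BijOn Ψ
        (Quotient.mk (rrel H n) ''
          {p : G × (Fin (n + 1) → G ⧸ H) | ∀ i, p.1 • p.2 i = p.2 i})
        {c : Quotient (lrel H n) | ∃ g : Fin (n + 1) → G,
          Quotient.mk (lrel H n) g = c ∧
          ∀ i : Fin (n + 1),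
            ((List.ofFn g).drop ((i : ℕ) + 1)).prod * ((List.ofFn g).take ((i : ℕ) + 1)).prod
              ∈ H} := by
  refine ⟨psiQ H n, psiQ_bijective H, fun gt x => psiFun_mk H gt _ x (fun _ => rfl), ?_⟩
  have himg : psiQ H n '' (Quotient.mk (rrel H n) ''
        {p : G × (Fin (n + 1) → G ⧸ H) | ∀ i, p.1 • p.2 i = p.2 i}) =
      {c : Quotient (lrel H n) | ∃ g : Fin (n + 1) → G,
        Quotient.mk (lrel H n) g = c ∧
        ∀ i : Fin (n + 1),
          ((List.ofFn g).drop ((i : ℕ) + 1)).prod * ((List.ofFn g).take ((i : ℕ) + 1)).prod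
            ∈ H} := by
    ext c
    constructor
    · rintro ⟨-, ⟨⟨gt, y⟩, hfix, rfl⟩, rfl⟩
      refine ⟨psiRep gt (fun i => (y i).out), rfl, fun i => ?_⟩
      rw [cyclic_psiRep]
      rw [← smul_mk_eq_iff H, QuotientGroup.out_eq']
      exact hfix i
    · rintro ⟨g, rfl, hcond⟩
      refine ⟨Quotient.mk (rrel H n) (gtP g, fun i => QuotientGroup.mk (xP g i)),
        ⟨(gtP g, fun i => QuotientGroup.mk (xP g i)), fun i => ?_, rfl⟩, ?_⟩
      · rw [smul_mk_eq_iff H]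
        have h := cyclic_psiRep (gtP g) (xP g) i
        rw [psiRep_section] at h
        rw [← h]
        exact hcond i
      · show psiFun H n (gtP g, fun i => QuotientGroup.mk (xP g i)) = _
        rw [psiFun_mk H _ _ (xP g) (fun i => rfl), psiRep_section]
  exact himg ▸ (psiQ_bijective H).injective.injOn.bijOn_image
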